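/- Fix ε ∈ (0,1) and let f_ε : (0,1) → (0,∞) be any function with the property that for all n, N, all δ ∈ (0,1), all u ∈ S_ε(n,N) and all n-tuples v of N×N complex matrices with ‖∑_j v_j ⊗ conj(v_j)‖ ≤ n, the inequality d'(u,v) ≥ f_ε(δ)·√n implies ‖∑_j u_j ⊗ conj(v_j)‖ ≤ n(1−δ). Then for every δ ∈ (0,1), every u ∈ S_ε(n,N), every positive integer k with k ≤ (1 − f_ε(δ)²)·N, and every n-tuple v = (v_1,…,v_n) of k×k unitary matrices, one has ‖∑_j u_j ξ v_j*‖₂ ≤ n(1−δ)·‖ξ‖₂ for every N×k complex matrix ξ. -/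

import Mathlib

open scoped BigOperators Kronecker
open Matrix MeasureTheory

noncomputable section

namespace QE

/-- `N × N` complex matrices. -/
abbrev Mat (N : ℕ) : Type := Matrix (Fin N) (Fin N) ℂ

/-- The unitary group `U(N)`. -/
abbrev U (N : ℕ) : Type := Matrix.unitaryGroup (Fin N) ℂ

/-- Frobenius (Hilbert-Schmidt) norm of a (possibly rectangular) complex matrix. -/
def frob {p q : ℕ} (ξ : Matrix (Fin p) (Fin q) ℂ) : ℝ :=
  Real.sqrt (∑ i, ∑ j, ‖ξ i j‖ ^ 2)

/-- `opN x y = ‖∑ⱼ xⱼ ⊗ conj (yⱼ)‖`: the operator norm, on `M_N(ℂ)` with the Frobenius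
norm, of the linear map `ξ ↦ ∑ⱼ xⱼ ξ yⱼ*`. -/
def opN {n N : ℕ} (x y : Fin n → Mat N) : ℝ :=
  sSup {r : ℝ | ∃ ξ : Mat N, frob ξ ≤ 1 ∧ r = frob (∑ j, x j * ξ * (y j)ᴴ)}

/-- `‖∑ⱼ xⱼ ⊗ yⱼ‖` (no conjugate on the second leg): equal to the operator norm of
`ξ ↦ ∑ⱼ xⱼ ξ yⱼᵀ`. -/
def tnorm {n N : ℕ} (x y : Fin n → Mat N) : ℝ :=
  opN x fun j => (y j).map (starRingEnd ℂ)

/-- Two `n`-tuples of `N × N` unitaries are `δ`-separated. -/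
def Sep {n N : ℕ} (δ : ℝ) (u v : Fin n → U N) : Prop :=
  opN (fun j => (u j : Mat N)) (fun j => (v j : Mat N)) ≤ n * (1 - δ)

/-- `S_ε(n,N)`: the set of `n`-tuples of `N × N` unitaries with `ε`-spectral gap. -/
def Sgap (ε : ℝ) (n N : ℕ) : Set (Fin n → U N) :=
  {u | ∀ ξ : Mat N, ξ.trace = 0 →
    frob (∑ j, (u j : Mat N) * ξ * ((u j : Mat N))ᴴ) ≤ ε * n * frob ξ}

/-- The distance `d(x,y) = (∑ⱼ ‖xⱼ - yⱼ‖₂²/N)^(1/2)` (normalized trace). -/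
def dist2 {n N : ℕ} (x y : Fin n → Mat N) : ℝ :=
  Real.sqrt ((∑ j, frob (x j - y j) ^ 2) / N)

/-- The two-sided-orbit distance `d'(x,y) = inf {d((a xⱼ b)ⱼ, y) : a, b ∈ U(N)}`. -/
def dist2' {n N : ℕ} (x y : Fin n → Mat N) : ℝ :=
  sInf {r : ℝ | ∃ a b : U N, r = dist2 (fun j => (a : Mat N) * x j * (b : Mat N)) y}

end QE

section Aux10
open QE

def frobSq {p q : ℕ} (ξ : Matrix (Fin p) (Fin q) ℂ) : ℝ := ∑ i, ∑ j, ‖ξ i j‖ ^ 2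

lemma frobSq_nonneg {p q : ℕ} (ξ : Matrix (Fin p) (Fin q) ℂ) : 0 ≤ frobSq ξ :=
  Finset.sum_nonneg fun i _ => Finset.sum_nonneg fun j _ => by positivity

lemma frob_eq {p q : ℕ} (ξ : Matrix (Fin p) (Fin q) ℂ) : frob ξ = Real.sqrt (frobSq ξ) := rfl

lemma frob_nonneg {p q : ℕ} (ξ : Matrix (Fin p) (Fin q) ℂ) : 0 ≤ frob ξ := Real.sqrt_nonneg _

lemma frob_sq {p q : ℕ} (ξ : Matrix (Fin p) (Fin q) ℂ) : frob ξ ^ 2 = frobSq ξ :=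
  Real.sq_sqrt (frobSq_nonneg ξ)

lemma re_star_mul (z : ℂ) : (star z * z).re = ‖z‖ ^ 2 := by
  rw [mul_comm, show star z = (starRingEnd ℂ) z from rfl, Complex.mul_conj']
  simp [← Complex.ofReal_pow]

lemma frobSq_eq_trace {p q : ℕ} (ξ : Matrix (Fin p) (Fin q) ℂ) :
    frobSq ξ = (Matrix.trace (ξᴴ * ξ)).re := by
  simp only [Matrix.trace, Matrix.diag, Matrix.mul_apply, Matrix.conjTranspose_apply,
    Complex.re_sum, re_star_mul, frobSq]
  exact Finset.sum_comm

lemma frob_mul_left_iso {p q r : ℕ} (B : Matrix (Fin p) (Fin q) ℂ) (hB : Bᴴ * B = 1)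
    (A : Matrix (Fin q) (Fin r) ℂ) : frob (B * A) = frob A := by
  rw [frob_eq, frob_eq, frobSq_eq_trace, frobSq_eq_trace]
  rw [Matrix.conjTranspose_mul, Matrix.mul_assoc, ← Matrix.mul_assoc Bᴴ B A, hB,
    Matrix.one_mul]

lemma frob_mul_right_iso {p q r : ℕ} (B : Matrix (Fin q) (Fin r) ℂ) (hB : B * Bᴴ = 1)
    (A : Matrix (Fin p) (Fin q) ℂ) : frob (A * B) = frob A := by
  rw [frob_eq, frob_eq, frobSq_eq_trace, frobSq_eq_trace]
  rw [Matrix.conjTranspose_mul, Matrix.mul_assoc, Matrix.trace_mul_comm,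
    Matrix.mul_assoc, Matrix.mul_assoc, hB, Matrix.mul_one, Matrix.trace_mul_comm]

/-- inclusion `Fin k → Fin N` as a matrix. -/
def incl {N k : ℕ} (hk : k ≤ N) : Matrix (Fin N) (Fin k) ℂ :=
  Matrix.of fun i a => if i = Fin.castLE hk a then 1 else 0

lemma star_incl_apply {N k : ℕ} (hk : k ≤ N) (i : Fin N) (a : Fin k) :
    star (incl hk i a) = incl hk i a := by
  simp only [incl, Matrix.of_apply]; split <;> simp

lemma incl_inv {N k : ℕ} (hk : k ≤ N) : (incl hk)ᴴ * incl hk = 1 := by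
  ext a b
  simp only [Matrix.mul_apply, Matrix.conjTranspose_apply, star_incl_apply, incl,
    Matrix.of_apply, ite_mul, one_mul, zero_mul, Finset.sum_ite_eq', Finset.mem_univ,
    if_true, Matrix.one_apply]
  rcases eq_or_ne a b with h | h
  · simp [h]
  · simp [h, h.symm]

lemma incl_cancel {N k r : ℕ} (hk : k ≤ N) (A : Matrix (Fin k) (Fin r) ℂ) :
    (incl hk)ᴴ * (incl hk * A) = A := by
  rw [← Matrix.mul_assoc, incl_inv, Matrix.one_mul]

lemma mul_incl_apply {p N k : ℕ} (hk : k ≤ N) (A : Matrix (Fin p) (Fin N) ℂ)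
    (i : Fin p) (a : Fin k) : (A * incl hk) i a = A i (Fin.castLE hk a) := by
  simp [Matrix.mul_apply, incl, Finset.sum_ite_eq']

lemma inclT_mul_apply {N k r : ℕ} (hk : k ≤ N) (A : Matrix (Fin N) (Fin r) ℂ)
    (a : Fin k) (j : Fin r) : ((incl hk)ᴴ * A) a j = A (Fin.castLE hk a) j := by
  simp [Matrix.mul_apply, Matrix.conjTranspose_apply, star_incl_apply, incl, ite_mul,
    Finset.sum_ite_eq]

lemma mul_inclT_apply_of_ge {p N k : ℕ} (hk : k ≤ N) (A : Matrix (Fin p) (Fin k) ℂ)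
    (i : Fin p) (j : Fin N) (hj : k ≤ (j : ℕ)) : (A * (incl hk)ᴴ) i j = 0 := by
  rw [Matrix.mul_apply]
  refine Finset.sum_eq_zero fun a _ => ?_
  have hne : j ≠ Fin.castLE hk a := by
    intro h
    have ha := a.isLt
    have : (j : ℕ) = (a : ℕ) := by rw [h]; rfl
    omega
  simp [Matrix.conjTranspose_apply, star_incl_apply, incl, hne]


lemma sum_castLE_le {N k : ℕ} (hk : k ≤ N) (g : Fin N → ℝ) (hg : ∀ j, 0 ≤ g j) :
    ∑ a : Fin k, g (Fin.castLE hk a) ≤ ∑ j : Fin N, g j := by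
  have h := Finset.sum_map Finset.univ (Fin.castLEEmb hk) g
  simp only [Fin.coe_castLEEmb] at h
  rw [← h]
  exact Finset.sum_le_sum_of_subset_of_nonneg (Finset.subset_univ _)
    (fun j _ _ => hg j)

lemma frob_mul_incl_le {p N k : ℕ} (hk : k ≤ N) (A : Matrix (Fin p) (Fin N) ℂ) :
    frob (A * incl hk) ≤ frob A := by
  rw [frob_eq, frob_eq]
  apply Real.sqrt_le_sqrt
  apply Finset.sum_le_sum
  intro i _
  simp only [mul_incl_apply]
  exact sum_castLE_le hk (fun j => ‖A i j‖ ^ 2) (fun j => by positivity)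

lemma frob_inclT_mul_le {N k r : ℕ} (hk : k ≤ N) (A : Matrix (Fin N) (Fin r) ℂ) :
    frob ((incl hk)ᴴ * A) ≤ frob A := by
  rw [frob_eq, frob_eq]
  apply Real.sqrt_le_sqrt
  simp only [frobSq, inclT_mul_apply]
  exact sum_castLE_le hk (fun i => ∑ j, ‖A i j‖ ^ 2)
    (fun i => Finset.sum_nonneg fun j _ => by positivity)

def vecOf {p q : ℕ} (A : Matrix (Fin p) (Fin q) ℂ) : EuclideanSpace ℂ (Fin p × Fin q) :=
  WithLp.toLp 2 (fun ij : Fin p × Fin q => A ij.1 ij.2)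

lemma frob_eq_norm {p q : ℕ} (A : Matrix (Fin p) (Fin q) ℂ) : frob A = ‖vecOf A‖ := by
  rw [EuclideanSpace.norm_eq]
  rw [frob_eq, frobSq]
  congr 1
  rw [Fintype.sum_prod_type]
  rfl

lemma frob_sum_le {n p q : ℕ} (M : Fin n → Matrix (Fin p) (Fin q) ℂ) :
    frob (∑ j, M j) ≤ ∑ j, frob (M j) := by
  simp only [frob_eq_norm]
  have h : vecOf (∑ j, M j) = ∑ j, vecOf (M j) := by
    ext ij
    rw [show ((∑ j, vecOf (M j)) ij) = ∑ j, vecOf (M j) ij from by simp [WithLp.ofLp_sum]]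
    simp [vecOf, Matrix.sum_apply]
  rw [h]
  exact norm_sum_le _ _

lemma frob_smul {p q : ℕ} (c : ℝ) (A : Matrix (Fin p) (Fin q) ℂ) :
    frob (c • A) = |c| * frob A := by
  simp only [frob_eq_norm]
  have h : vecOf (c • A) = c • vecOf A := by
    ext ij; simp [vecOf]
  rw [h, norm_smul, Real.norm_eq_abs]

lemma frob_pos {p q : ℕ} (A : Matrix (Fin p) (Fin q) ℂ) (hA : A ≠ 0) : 0 < frob A := by
  rcases (frob_nonneg A).lt_or_eq with h | h
  · exact h
  · exfalso
    apply hA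
    have h2 : ‖vecOf A‖ = 0 := by rw [← frob_eq_norm, ← h]
    have h3 : vecOf A = 0 := norm_eq_zero.mp h2
    ext i j
    have := congrArg (fun v => v (i, j)) h3
    simpa [vecOf] using this

lemma frob_zero {p q : ℕ} : frob (0 : Matrix (Fin p) (Fin q) ℂ) = 0 := by
  simp [frob]

lemma opN_le {n N : ℕ} (x y : Fin n → Mat N) (C : ℝ) (hC : 0 ≤ C)
    (h : ∀ ξ : Mat N, frob ξ ≤ 1 → frob (∑ j, x j * ξ * (y j)ᴴ) ≤ C) : opN x y ≤ C := by
  apply Real.sSup_le _ hC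
  rintro r ⟨ξ, hξ, rfl⟩
  exact h ξ hξ

lemma le_opN_mul {n N : ℕ} (x y : Fin n → Mat N) (C : ℝ)
    (hb : ∀ ξ : Mat N, frob ξ ≤ 1 → frob (∑ j, x j * ξ * (y j)ᴴ) ≤ C) (ξ : Mat N) :
    frob (∑ j, x j * ξ * (y j)ᴴ) ≤ opN x y * frob ξ := by
  have hbdd : BddAbove {r : ℝ | ∃ ξ : Mat N, frob ξ ≤ 1 ∧ r = frob (∑ j, x j * ξ * (y j)ᴴ)} := by
    refine ⟨max C 0, ?_⟩
    rintro r ⟨η, hη, rfl⟩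
    exact le_max_of_le_left (hb η hη)
  by_cases h0 : ξ = 0
  · subst h0
    simp only [Matrix.mul_zero, Matrix.zero_mul, Finset.sum_const_zero, frob_zero, mul_zero]
    exact le_refl 0
  · have hcpos : 0 < frob ξ := frob_pos ξ h0
    set c := frob ξ with hc
    have hmem : frob (∑ j, x j * (c⁻¹ • ξ) * (y j)ᴴ)
        ∈ {r : ℝ | ∃ ξ : Mat N, frob ξ ≤ 1 ∧ r = frob (∑ j, x j * ξ * (y j)ᴴ)} := by
      refine ⟨c⁻¹ • ξ, ?_, rfl⟩
      rw [frob_smul, abs_of_pos (inv_pos.mpr hcpos), ← hc, inv_mul_cancel₀ hcpos.ne']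
    have hle := le_csSup hbdd hmem
    have hscal : (∑ j, x j * (c⁻¹ • ξ) * (y j)ᴴ) = c⁻¹ • ∑ j, x j * ξ * (y j)ᴴ := by
      rw [Finset.smul_sum]
      refine Finset.sum_congr rfl fun j _ => ?_
      rw [Matrix.mul_smul, Matrix.smul_mul]
    rw [hscal, frob_smul, abs_of_pos (inv_pos.mpr hcpos)] at hle
    have h2 := mul_le_mul_of_nonneg_left hle hcpos.le
    rw [← mul_assoc, mul_inv_cancel₀ hcpos.ne', one_mul] at h2
    calc frob (∑ j, x j * ξ * (y j)ᴴ) ≤ c * opN x y := h2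
      _ = opN x y * c := mul_comm _ _

lemma col_norm_one {N : ℕ} (M : U N) (j' : Fin N) :
    ∑ i, ‖(M : Mat N) i j'‖ ^ 2 = 1 := by
  have h := Matrix.UnitaryGroup.star_mul_self M
  have h2 : (star (M : Mat N) * (M : Mat N)) j' j' = 1 := by rw [h]; simp [Matrix.one_apply]
  have h3 : ((star (M : Mat N) * (M : Mat N)) j' j').re = 1 := by rw [h2]; rfl
  rw [← h3]
  simp only [Matrix.mul_apply, Matrix.star_apply, Complex.re_sum, re_star_mul]

lemma key_lower {N k : ℕ} (hk : k ≤ N) (M : U N) (B : Matrix (Fin N) (Fin k) ℂ) :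
    (N : ℝ) - k ≤ frobSq ((M : Mat N) - B * (incl hk)ᴴ) := by
  set g : Fin N → ℝ := fun j' => ∑ i, ‖((M : Mat N) - B * (incl hk)ᴴ) i j'‖ ^ 2 with hg
  have hgood : ∀ j' : Fin N, k ≤ (j' : ℕ) → g j' = 1 := by
    intro j' hj'
    have hB : ∀ i, (B * (incl hk)ᴴ) i j' = 0 := fun i => mul_inclT_apply_of_ge hk B i j' hj'
    have heq : ∀ i, ((M : Mat N) - B * (incl hk)ᴴ) i j' = (M : Mat N) i j' := by
      intro i; simp [Matrix.sub_apply, hB]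
    simp only [hg, heq]
    exact col_norm_one M j'
  have hnn : ∀ j', 0 ≤ g j' := fun j' => Finset.sum_nonneg fun i _ => by positivity
  let e : Fin (N - k) ↪ Fin N :=
    ⟨fun a => ⟨k + (a : ℕ), by omega⟩, by
      intro a b hab
      have := congrArg Fin.val hab
      simp only at this
      exact Fin.ext (by omega)⟩
  have hsum : ∑ a : Fin (N - k), g (e a) = (N : ℝ) - k := by
    have h1 : ∀ a : Fin (N - k), g (e a) = 1 := by
      intro a
      exact hgood _ (by show k ≤ k + (a : ℕ); omega)
    rw [Finset.sum_congr rfl fun a _ => h1 a]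
    have hc : (Finset.univ : Finset (Fin (N - k))).card = N - k := by simp
    rw [Finset.sum_const, hc, nsmul_eq_mul, mul_one]
    push_cast [Nat.cast_sub hk]
    ring
  have hmap : ∑ a : Fin (N - k), g (e a) = ∑ j' ∈ Finset.univ.map e, g j' :=
    (Finset.sum_map _ _ _).symm
  have hle : ∑ j' ∈ Finset.univ.map e, g j' ≤ ∑ j', g j' :=
    Finset.sum_le_sum_of_subset_of_nonneg (Finset.subset_univ _) (fun j' _ _ => hnn j')
  have hfs : ∑ j', g j' = frobSq ((M : Mat N) - B * (incl hk)ᴴ) := Finset.sum_comm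
  calc (N : ℝ) - k = ∑ j' ∈ Finset.univ.map e, g j' := by rw [← hmap, hsum]
    _ ≤ ∑ j', g j' := hle
    _ = _ := hfs

end Aux10


open QE in
/-- a tuple with an ε-spectral gap is separated from any tuple of unitaries
of sufficiently smaller size `k ≤ (1 - f_ε(δ)²)N`. -/
theorem stmt_10 (ε : ℝ) (hε0 : 0 < ε) (hε1 : ε < 1) (f : ℝ → ℝ)
    (hfpos : ∀ δ : ℝ, 0 < δ → δ < 1 → 0 < f δ)
    (hf : ∀ (n N : ℕ) (δ : ℝ), 0 < δ → δ < 1 →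
      ∀ u : Fin n → U N, u ∈ Sgap ε n N →
      ∀ v : Fin n → Mat N, opN v v ≤ n →
        f δ * Real.sqrt n ≤ dist2' (fun j => (u j : Mat N)) v →
        opN (fun j => (u j : Mat N)) v ≤ n * (1 - δ)) :
    ∀ (n N : ℕ) (δ : ℝ), 0 < δ → δ < 1 →
    ∀ u : Fin n → U N, u ∈ Sgap ε n N →
    ∀ k : ℕ, 0 < k → (k : ℝ) ≤ (1 - (f δ) ^ 2) * N →
    ∀ v : Fin n → Matrix.unitaryGroup (Fin k) ℂ,
    ∀ ξ : Matrix (Fin N) (Fin k) ℂ,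
      frob (∑ j, (u j : Mat N) * ξ * ((v j : Matrix (Fin k) (Fin k) ℂ))ᴴ)
        ≤ n * (1 - δ) * frob ξ := by
  intro n N δ hδ0 hδ1 u hu k hk0 hkN v ξ
  have hfδ := hfpos δ hδ0 hδ1
  have hk1 : (1:ℝ) ≤ (k:ℝ) := by exact_mod_cast hk0
  have hN0 : 0 < (N:ℝ) := by
    by_contra hcon
    push_neg at hcon
    have hN : (N:ℝ) = 0 := le_antisymm hcon (Nat.cast_nonneg N)
    rw [hN, mul_zero] at hkN; linarith
  have hfk : (f δ)^2 * N ≤ (N:ℝ) - k := by nlinarith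
  have hkN' : k ≤ N := by
    have : (k:ℝ) ≤ N := by nlinarith [sq_nonneg (f δ)]
    exact_mod_cast this
  set ι : Matrix (Fin N) (Fin k) ℂ := incl hkN' with hι
  set w : Fin n → Mat N := fun j => ι * (v j : Matrix (Fin k) (Fin k) ℂ) * ιᴴ with hw
  have hιinv : ιᴴ * ι = 1 := incl_inv hkN'
  have hιT : ιᴴ * ιᴴᴴ = 1 := by rw [Matrix.conjTranspose_conjTranspose]; exact hιinv
  have hcan : ∀ (r : ℕ) (A : Matrix (Fin k) (Fin r) ℂ), ιᴴ * (ι * A) = A := by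
    intro r A; rw [← Matrix.mul_assoc, hιinv, Matrix.one_mul]
  have hvj : ∀ j, ((v j : Matrix (Fin k) (Fin k) ℂ))ᴴ * (v j : Matrix (Fin k) (Fin k) ℂ) = 1 := by
    intro j
    simpa [Matrix.star_eq_conjTranspose] using Matrix.UnitaryGroup.star_mul_self (v j)
  have hvjT : ∀ j, ((v j : Matrix (Fin k) (Fin k) ℂ))ᴴ * ((v j : Matrix (Fin k) (Fin k) ℂ))ᴴᴴ = 1 := by
    intro j; rw [Matrix.conjTranspose_conjTranspose]; exact hvj j
  have huj : ∀ j, ((u j : Mat N))ᴴ * (u j : Mat N) = 1 := by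
    intro j
    simpa [Matrix.star_eq_conjTranspose] using Matrix.UnitaryGroup.star_mul_self (u j)
  -- bound for `u, w` pairs
  have hterm_uw : ∀ (j : Fin n) (ξ' : Mat N),
      frob ((u j : Mat N) * ξ' * (w j)ᴴ) ≤ frob ξ' := by
    intro j ξ'
    have e1 : (u j : Mat N) * ξ' * (w j)ᴴ
        = (((u j : Mat N) * ξ' * ι) * ((v j : Matrix (Fin k) (Fin k) ℂ))ᴴ) * ιᴴ := by
      simp only [hw, Matrix.conjTranspose_mul, Matrix.conjTranspose_conjTranspose,
        Matrix.mul_assoc]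
    rw [e1, frob_mul_right_iso _ hιT, frob_mul_right_iso _ (hvjT j)]
    calc frob ((u j : Mat N) * ξ' * ι) ≤ frob ((u j : Mat N) * ξ') :=
          frob_mul_incl_le hkN' _
      _ = frob ξ' := frob_mul_left_iso _ (huj j) _
  have hbdd_uw : ∀ ξ' : Mat N, frob ξ' ≤ 1 →
      frob (∑ j, (u j : Mat N) * ξ' * (w j)ᴴ) ≤ (n : ℝ) := by
    intro ξ' hξ'
    calc frob (∑ j, (u j : Mat N) * ξ' * (w j)ᴴ)
        ≤ ∑ j, frob ((u j : Mat N) * ξ' * (w j)ᴴ) := frob_sum_le _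
      _ ≤ ∑ _j : Fin n, (1:ℝ) := Finset.sum_le_sum fun j _ =>
          le_trans (hterm_uw j ξ') hξ'
      _ = (n : ℝ) := by simp
  -- opN w w ≤ n
  have hww : opN w w ≤ (n : ℝ) := by
    apply opN_le _ _ _ (Nat.cast_nonneg n)
    intro ξ' hξ'
    have hterm : ∀ j : Fin n, frob (w j * ξ' * (w j)ᴴ) ≤ frob ξ' := by
      intro j
      have e1 : w j * ξ' * (w j)ᴴ
          = ι * (((v j : Matrix (Fin k) (Fin k) ℂ) * ((ιᴴ * ξ' * ι))
              * ((v j : Matrix (Fin k) (Fin k) ℂ))ᴴ) * ιᴴ) := by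
        simp only [hw, Matrix.conjTranspose_mul, Matrix.conjTranspose_conjTranspose,
          Matrix.mul_assoc]
      rw [e1, frob_mul_left_iso _ hιinv, frob_mul_right_iso _ hιT,
        frob_mul_right_iso _ (hvjT j), frob_mul_left_iso _ (hvj j)]
      calc frob (ιᴴ * ξ' * ι) ≤ frob (ιᴴ * ξ') := frob_mul_incl_le hkN' _
        _ ≤ frob ξ' := frob_inclT_mul_le hkN' _
    calc frob (∑ j, w j * ξ' * (w j)ᴴ) ≤ ∑ j, frob (w j * ξ' * (w j)ᴴ) := frob_sum_le _
      _ ≤ ∑ _j : Fin n, (1:ℝ) := Finset.sum_le_sum fun j _ => le_trans (hterm j) hξ'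
      _ = (n : ℝ) := by simp
  -- distance lower bound
  have hdist : f δ * Real.sqrt n ≤ dist2' (fun j => (u j : Mat N)) w := by
    refine le_csInf ⟨_, ⟨1, 1, rfl⟩⟩ ?_
    rintro r ⟨a, b, rfl⟩
    rw [dist2]
    have hper : ∀ j : Fin n, (f δ)^2 * N ≤
        frob ((a : Mat N) * (u j : Mat N) * (b : Mat N) - w j) ^ 2 := by
      intro j
      rw [frob_sq]
      have hM : (a : Mat N) * (u j : Mat N) * (b : Mat N)
          = ((a * u j * b : U N) : Mat N) := rfl
      have hwj : w j = (ι * (v j : Matrix (Fin k) (Fin k) ℂ)) * ιᴴ := rfl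
      rw [hM, hwj]
      exact le_trans hfk (key_lower hkN' (a * u j * b) (ι * (v j : Matrix (Fin k) (Fin k) ℂ)))
    have hsum : (n : ℝ) * ((f δ)^2 * N) ≤
        ∑ j, frob ((a : Mat N) * (u j : Mat N) * (b : Mat N) - w j) ^ 2 := by
      have := Finset.card_nsmul_le_sum Finset.univ
        (fun j : Fin n => frob ((a : Mat N) * (u j : Mat N) * (b : Mat N) - w j) ^ 2)
        ((f δ)^2 * N) (fun j _ => hper j)
      simpa [nsmul_eq_mul] using this
    have hdiv : (f δ)^2 * n ≤
        (∑ j, frob ((a : Mat N) * (u j : Mat N) * (b : Mat N) - w j) ^ 2) / N := by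
      rw [le_div_iff₀ hN0]
      calc (f δ)^2 * n * N = (n : ℝ) * ((f δ)^2 * N) := by ring
        _ ≤ _ := hsum
    calc f δ * Real.sqrt n = Real.sqrt ((f δ)^2) * Real.sqrt n := by
          rw [Real.sqrt_sq hfδ.le]
      _ = Real.sqrt ((f δ)^2 * n) := (Real.sqrt_mul (sq_nonneg _) _).symm
      _ ≤ _ := Real.sqrt_le_sqrt hdiv
  -- separation
  have hsep := hf n N δ hδ0 hδ1 u hu w hww hdist
  -- conclude
  have hfinal := le_opN_mul (fun j => (u j : Mat N)) w (n : ℝ) hbdd_uw (ξ * ιᴴ)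
  have hident : (∑ j, (u j : Mat N) * (ξ * ιᴴ) * (w j)ᴴ)
      = (∑ j, (u j : Mat N) * ξ * ((v j : Matrix (Fin k) (Fin k) ℂ))ᴴ) * ιᴴ := by
    rw [Matrix.sum_mul]
    refine Finset.sum_congr rfl fun j _ => ?_
    simp only [hw, Matrix.conjTranspose_mul, Matrix.conjTranspose_conjTranspose,
      Matrix.mul_assoc]
    rw [hcan]
  rw [hident, frob_mul_right_iso _ hιT, frob_mul_right_iso _ hιT] at hfinal
  calc frob (∑ j, (u j : Mat N) * ξ * ((v j : Matrix (Fin k) (Fin k) ℂ))ᴴ)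
      ≤ opN (fun j => (u j : Mat N)) w * frob ξ := hfinal
    _ ≤ (n : ℝ) * (1 - δ) * frob ξ :=
        mul_le_mul_of_nonneg_right hsep (frob_nonneg ξ)

end
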